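/- Two finite-state machines M_I (independent) and M_D (dependent) obtained from orthogonal, input-preserving partitions (π_I, π_D) of a machine M jointly simulate M: for every input sequence x₁…x_t, if M reaches state q after reading the sequence, then M_I reaches the block B_I(q) ∈ π_I and M_D reaches the block B_D(q) ∈ π_D, and hence q = χ(B_I(q), B_D(q)) is recoverable. -/

import Mathlib

/-!
Each quotient machine tracks the block of `M`'s current state: if `q ∈ B`, then `T q x ∈ T_B B x`,
so by induction on the input word the state reached by `M` lies in the block reached by each
quotient machine. The two reached blocks are blocks of orthogonal partitions sharing that state,
so their intersection is exactly it.
-/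

theorem List.foldl_rel_foldl {α β ι : Type*} (R : α → β → Prop) (f : α → ι → α) (g : β → ι → β)
    (hstep : ∀ a b x, R a b → R (f a x) (g b x)) :
    ∀ (xs : List ι) {a : α} {b : β}, R a b → R (xs.foldl f a) (xs.foldl g b)
  | [], _, _, h => h
  | x :: xs, _, _, h => List.foldl_rel_foldl R f g hstep xs (hstep _ _ x h)

theorem foldl_mem_foldl_block {S I : Type*} {P : Finset (Finset S)} (T : S → I → S)
    (TB : Finset S → I → Finset S) (hTB : ∀ B ∈ P, ∀ x, TB B x ∈ P ∧ ∀ q ∈ B, T q x ∈ TB B x)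
    (xs : List I) {s : S} {B : Finset S} (hB : B ∈ P) (hs : s ∈ B) :
    xs.foldl TB B ∈ P ∧ xs.foldl T s ∈ xs.foldl TB B :=
  List.foldl_rel_foldl (fun s B => B ∈ P ∧ s ∈ B) T TB
    (fun _ B x ⟨hB, hs⟩ => ⟨(hTB B hB x).1, (hTB B hB x).2 _ hs⟩) xs ⟨hB, hs⟩

theorem Finset.inter_eq_singleton_of_card_le_one {S : Type*} [DecidableEq S] {B C : Finset S}
    {q : S} (hcard : (B ∩ C).card ≤ 1) (hB : q ∈ B) (hC : q ∈ C) : B ∩ C = {q} :=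
  have hq : q ∈ B ∩ C := mem_inter.2 ⟨hB, hC⟩
  eq_singleton_iff_unique_mem.2 ⟨hq, fun _ hp => card_le_one.1 hcard _ hp _ hq⟩

/-- The independent and dependent quotient machines jointly simulate `M`:
if `πI`, `πD` are orthogonal input-preserving partitions of the state set of a
deterministic machine with transition function `T` and start state `s0`, with
induced block transition functions `TI`, `TD` and start blocks `B0`, `C0`, then
after any input sequence `xs` the state reached by `M` lies in the blocks
reached by the two quotient machines, and it is the unique element of their
intersection (hence recoverable as `χ` of the two reached blocks). -/
theorem quotient_machines_simulate {S I : Type*} [Fintype S] [DecidableEq S]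
    (T : S → I → S) (s0 : S)
    (πI πD : Finpartition (Finset.univ : Finset S))
    (horth : ∀ B ∈ πI.parts, ∀ C ∈ πD.parts, (B ∩ C).card ≤ 1)
    (TI TD : Finset S → I → Finset S)
    (hTI : ∀ B ∈ πI.parts, ∀ x, TI B x ∈ πI.parts ∧ ∀ q ∈ B, T q x ∈ TI B x)
    (hTD : ∀ C ∈ πD.parts, ∀ x, TD C x ∈ πD.parts ∧ ∀ q ∈ C, T q x ∈ TD C x)
    (B0 : Finset S) (hB0 : B0 ∈ πI.parts ∧ s0 ∈ B0)
    (C0 : Finset S) (hC0 : C0 ∈ πD.parts ∧ s0 ∈ C0) :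
    ∀ xs : List I,
      xs.foldl T s0 ∈ xs.foldl TI B0 ∧
      xs.foldl T s0 ∈ xs.foldl TD C0 ∧
      xs.foldl TI B0 ∩ xs.foldl TD C0 = {xs.foldl T s0} := by
  intro xs
  obtain ⟨hBpart, hmemB⟩ := foldl_mem_foldl_block T TI hTI xs hB0.1 hB0.2
  obtain ⟨hCpart, hmemC⟩ := foldl_mem_foldl_block T TD hTD xs hC0.1 hC0.2
  exact ⟨hmemB, hmemC,
    Finset.inter_eq_singleton_of_card_le_one (horth _ hBpart _ hCpart) hmemB hmemC⟩
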